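/- Let V : {ρ>0}×ℝ² → ℝ be C¹, let η₁ (with parameter a₁) and η₂ (with parameter a₂) be admissible, and let ε₁, ε₂ : {ρ>0}×ℝ² → (0,∞) be continuous. Let (ρ,δ,γ) : [0,∞) → {ρ>0}×ℝ² be a solution of the polar unicycle with continuous controls v, ω such that |v(t)|/(ε₁ρ(t)) < a₁ and |ω(t)|/ε₂ < a₂ for all t ≥ 0 (ε₁, ε₂, ν₁, ν₂ evaluated along the trajectory), and suppose V(ρ(t),δ(t),γ(t)) → 0 as t → ∞. Then the cost J = ∫₀^∞ [ℓη₁(ε₁|ν₁|) + ℓη₂(ε₂|ν₂|) + η₁(|v|/(ε₁ρ)) + η₂(|ω|/ε₂)] dt satisfies J ≥ V(ρ(0),δ(0),γ(0)). -/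

import Mathlib

/-!
STATEMENT 8: For any admissible η₁, η₂, continuous positive penalty weights
ε₁, ε₂, and any solution of the polar unicycle with saturating controls and
V → 0 along the trajectory, the cost
J = ∫₀^∞ [ℓη₁(ε₁|ν₁|) + ℓη₂(ε₂|ν₂|) + η₁(|v|/(ε₁ρ)) + η₂(|ω|/ε₂)] dt
satisfies J ≥ V(ρ(0),δ(0),γ(0)).
-/
noncomputable section

open Real Set Filter MeasureTheory

/-- The domain [0,a) for a ∈ (0,∞], encoded with a : EReal. -/
def domA (a : EReal) : Set ℝ := {r : ℝ | 0 ≤ r ∧ (r : EReal) < a}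

/-- The filter of real numbers tending to a from the left (r → a⁻);
for a = ⊤ this is the filter at infinity. -/
def leftLimA (a : EReal) : Filter ℝ :=
  Filter.comap (fun r : ℝ => (r : EReal)) (nhdsWithin a (Set.Iio a))

/-- η : [0,a) → [0,∞) is admissible with derivative η′ and inverse g = (η′)⁻¹. -/
structure IsAdmissible (a : EReal) (η η' g : ℝ → ℝ) : Prop where
  ha : 0 < a
  hasDeriv : ∀ r ∈ domA a, HasDerivWithinAt η (η' r) (domA a) r
  nonneg : ∀ r ∈ domA a, 0 ≤ η r
  zero : η 0 = 0
  mono : StrictMonoOn η (domA a)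
  tendsto : Tendsto η (leftLimA a) atTop
  dcont : ContinuousOn η' (domA a)
  dmono : StrictMonoOn η' (domA a)
  dzero : η' 0 = 0
  dtendsto : Tendsto η' (leftLimA a) atTop
  gmem : ∀ s : ℝ, 0 ≤ s → g s ∈ domA a
  gleft : ∀ r ∈ domA a, g (η' r) = r
  gright : ∀ s : ℝ, 0 ≤ s → η' (g s) = s

/-- Legendre–Fenchel transform ℓη(r) = ∫₀^r (η′)⁻¹(s) ds, with g = (η′)⁻¹. -/
def lfT (g : ℝ → ℝ) (r : ℝ) : ℝ := ∫ s in (0 : ℝ)..r, g s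

/-- The continuous linear map (u,w,x) ↦ aρ·u + aδ·w + aγ·x, the total derivative
of a function of (ρ,δ,γ) with partial derivatives (aρ,aδ,aγ). -/
def gradMap (aρ aδ aγ : ℝ) : (ℝ × ℝ × ℝ) →L[ℝ] ℝ :=
  aρ • ContinuousLinearMap.fst ℝ ℝ (ℝ × ℝ)
    + aδ • ((ContinuousLinearMap.fst ℝ ℝ ℝ).comp (ContinuousLinearMap.snd ℝ ℝ (ℝ × ℝ)))
    + aγ • ((ContinuousLinearMap.snd ℝ ℝ ℝ).comp (ContinuousLinearMap.snd ℝ ℝ (ℝ × ℝ)))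

/-- ν₁ = −(∂V/∂ρ) ρ cos γ + (∂V/∂δ + ∂V/∂γ) sin γ, built from the partial
derivatives Vρ, Vδ, Vγ of V at the state p = (ρ,δ,γ). -/
def nuOne (Vρ Vδ Vγ : ℝ × ℝ × ℝ → ℝ) (p : ℝ × ℝ × ℝ) : ℝ :=
  -(Vρ p) * p.1 * Real.cos p.2.2 + (Vδ p + Vγ p) * Real.sin p.2.2

/-- ν₂ = −∂V/∂γ. -/
def nuTwo (Vγ : ℝ × ℝ × ℝ → ℝ) (p : ℝ × ℝ × ℝ) : ℝ := -(Vγ p)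

open Topology

/-!
Along the trajectory `dV/dt = ν₁ (v/ρ) + ν₂ ω`, and each product is bounded below by
`-(ℓη(ε|ν|) + η(|u|/ε))` by the Fenchel–Young inequality `s r ≤ ℓη(s) + η(r)`. Integrating
`-dV/dt ≤ (running cost)` over `[0, T]` and letting `T → ∞` (where `V → 0`) gives `V(0) ≤ J`.

For Young's inequality it suffices to show `Φ(s) = ℓη(s) - s (η′)⁻¹(s) + η((η′)⁻¹(s)) ≥ 0`.
By convexity of `η` and monotonicity of `(η′)⁻¹`, the increments of `Φ` satisfy
`Φ(t) - Φ(s) ≥ -(t - s)((η′)⁻¹(t) - (η′)⁻¹(s))`. Over a uniform partition of `[0, s]` into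
`n` pieces these error terms telescope to `-(s/n)(η′)⁻¹(s) → 0`, so `Φ(s) ≥ Φ(0) = 0`.
-/

theorem le_of_sub_ge_neg_mul_sub {Φ g : ℝ → ℝ} {x y : ℝ} (hxy : x ≤ y)
    (hΦ : ∀ u t, x ≤ u → u ≤ t → t ≤ y → -((t - u) * (g t - g u)) ≤ Φ t - Φ u) :
    Φ x ≤ Φ y := by
  have hstep : ∀ n : ℕ, 0 < n → -((y - x) / n * (g y - g x)) ≤ Φ y - Φ x := by
    intro n hn
    set h := (y - x) / n
    have hh : 0 ≤ h := div_nonneg (sub_nonneg.2 hxy) n.cast_nonneg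
    set p : ℕ → ℝ := fun k => x + k * h
    have hp0 : p 0 = x := by simp [p]
    have hpn : p n = y := by simp only [p, h]; field_simp; ring
    have hp_le : ∀ k ≤ n, x ≤ p k ∧ p k ≤ y := fun k hk => by
      refine ⟨le_add_of_nonneg_right (mul_nonneg k.cast_nonneg hh), ?_⟩
      rw [← hpn]
      simp only [p]
      gcongr
    have hp_succ : ∀ k, p (k + 1) - p k = h := fun k => by simp only [p]; push_cast; ring
    calc -(h * (g y - g x))
        = ∑ k ∈ Finset.range n, -((p (k + 1) - p k) * (g (p (k + 1)) - g (p k))) := by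
          simp only [hp_succ, Finset.sum_neg_distrib, ← Finset.mul_sum,
            Finset.sum_range_sub (fun k => g (p k)), hp0, hpn]
      _ ≤ ∑ k ∈ Finset.range n, (Φ (p (k + 1)) - Φ (p k)) := by
          refine Finset.sum_le_sum fun k hk => ?_
          have hk := Finset.mem_range.1 hk
          exact hΦ _ _ (hp_le k hk.le).1 (by linarith [hp_succ k]) (hp_le (k + 1) hk).2
      _ = Φ y - Φ x := by rw [Finset.sum_range_sub (fun k => Φ (p k)), hp0, hpn]
  have hlim : Tendsto (fun n : ℕ => -((y - x) / n * (g y - g x))) atTop (𝓝 0) := by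
    simpa using ((tendsto_const_div_atTop_nhds_zero_nat (y - x)).mul_const (g y - g x)).neg
  have : 0 ≤ Φ y - Φ x := le_of_tendsto hlim <| by
    filter_upwards [eventually_gt_atTop 0] with n hn using hstep n hn
  linarith

theorem mul_sub_le_lfT_sub_lfT {g : ℝ → ℝ} (hg : MonotoneOn g (Ici 0)) {s t : ℝ}
    (hs : 0 ≤ s) (hst : s ≤ t) : (t - s) * g s ≤ lfT g t - lfT g s := by
  have hint : ∀ {u w : ℝ}, 0 ≤ u → u ≤ w → IntervalIntegrable g volume u w := fun hu huw =>
    (hg.mono fun z hz => hu.trans (uIcc_of_le huw ▸ hz).1).intervalIntegrable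
  rw [lfT, lfT, intervalIntegral.integral_interval_sub_left (hint le_rfl (hs.trans hst))
    (hint le_rfl hs)]
  calc (t - s) * g s = ∫ _ in s..t, g s := by simp [mul_comm]
    _ ≤ ∫ u in s..t, g u := intervalIntegral.integral_mono_on hst intervalIntegrable_const
          (hint hs hst) fun u hu => hg hs (hs.trans hu.1) hu.1

theorem Icc_subset_domA {a : EReal} {x y : ℝ} (hx : 0 ≤ x) (hy : y ∈ domA a) :
    Icc x y ⊆ domA a :=
  fun z hz => ⟨hx.trans hz.1, lt_of_le_of_lt (by exact_mod_cast hz.2) hy.2⟩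

namespace IsAdmissible

variable {a : EReal} {η η' g : ℝ → ℝ}

theorem monotoneOn_inv (h : IsAdmissible a η η' g) : MonotoneOn g (Ici 0) := by
  intro s hs t ht hst
  by_contra! hlt
  have := h.dmono (h.gmem t ht) (h.gmem s hs) hlt
  rw [h.gright t ht, h.gright s hs] at this
  linarith

theorem inv_zero (h : IsAdmissible a η η' g) : g 0 = 0 := by
  simpa [h.dzero] using h.gleft 0 ⟨le_rfl, by simpa using h.ha⟩

theorem exists_slope_eq {x y : ℝ} (h : IsAdmissible a η η' g) (hx : 0 ≤ x) (hy : y ∈ domA a)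
    (hxy : x < y) : ∃ c ∈ Ioo x y, η y - η x = η' c * (y - x) := by
  have hsub := Icc_subset_domA hx hy
  obtain ⟨c, hc, hslope⟩ := exists_hasDerivAt_eq_slope η η' hxy
    (fun r hr => (h.hasDeriv r (hsub hr)).continuousWithinAt.mono hsub)
    (fun r hr => (h.hasDeriv r (hsub (Ioo_subset_Icc_self hr))).hasDerivAt
      (mem_of_superset (Ioo_mem_nhds hr.1 hr.2) (Ioo_subset_Icc_self.trans hsub)))
  exact ⟨c, hc, by rw [hslope]; field_simp [(sub_pos.2 hxy).ne']⟩

theorem tangent_le {r₀ r : ℝ} (h : IsAdmissible a η η' g) (hr₀ : r₀ ∈ domA a)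
    (hr : r ∈ domA a) : η r₀ + η' r₀ * (r - r₀) ≤ η r := by
  rcases lt_trichotomy r₀ r with hlt | rfl | hgt
  · obtain ⟨c, hc, hslope⟩ := h.exists_slope_eq hr₀.1 hr hlt
    have : η' r₀ ≤ η' c :=
      h.dmono.monotoneOn hr₀ (Icc_subset_domA hr₀.1 hr ⟨hc.1.le, hc.2.le⟩) hc.1.le
    linarith [mul_le_mul_of_nonneg_right this (sub_pos.2 hlt).le]
  · simp
  · obtain ⟨c, hc, hslope⟩ := h.exists_slope_eq hr.1 hr₀ hgt
    have : η' c ≤ η' r₀ :=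
      h.dmono.monotoneOn (Icc_subset_domA hr.1 hr₀ ⟨hc.1.le, hc.2.le⟩) hr₀ hc.2.le
    linarith [mul_le_mul_of_nonneg_right this (sub_pos.2 hgt).le]

theorem mul_inv_sub_le_lfT (h : IsAdmissible a η η' g) {s : ℝ} (hs : 0 ≤ s) :
    s * g s - η (g s) ≤ lfT g s := by
  let Φ : ℝ → ℝ := fun s => lfT g s - s * g s + η (g s)
  have hΦ0 : Φ 0 = 0 := by simp [Φ, lfT, h.inv_zero, h.zero]
  suffices Φ 0 ≤ Φ s by simp only [Φ] at this hΦ0; linarith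
  refine le_of_sub_ge_neg_mul_sub (g := g) hs fun u t hu hut _ => ?_
  have ht := hu.trans hut
  have hlfT := mul_sub_le_lfT_sub_lfT h.monotoneOn_inv hu hut
  have hη := h.tangent_le (h.gmem u hu) (h.gmem t ht)
  rw [h.gright u hu] at hη
  simp only [Φ]
  linarith

theorem young (h : IsAdmissible a η η' g) {s r : ℝ} (hs : 0 ≤ s) (hr : r ∈ domA a) :
    s * r ≤ lfT g s + η r := by
  have hη := h.tangent_le (h.gmem s hs) hr
  rw [h.gright s hs] at hη
  linarith [h.mul_inv_sub_le_lfT hs]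

theorem neg_mul_le_lfT_add (h : IsAdmissible a η η' g) {ε ν u : ℝ} (hε : 0 < ε)
    (hu : |u| / ε ∈ domA a) : -(ν * u) ≤ lfT g (ε * |ν|) + η (|u| / ε) := by
  have hy := h.young (mul_nonneg hε.le (abs_nonneg ν)) hu
  calc -(ν * u) ≤ |ν * u| := neg_le_abs _
    _ = ε * |ν| * (|u| / ε) := by rw [abs_mul]; field_simp
    _ ≤ _ := hy

end IsAdmissible

theorem ofReal_integral_le_lintegral_ofReal {α : Type*} [MeasurableSpace α] {μ : Measure α}
    {f : α → ℝ} (hf : Integrable f μ) :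
    ENNReal.ofReal (∫ x, f x ∂μ) ≤ ∫⁻ x, ENNReal.ofReal (f x) ∂μ := by
  refine (ENNReal.ofReal_le_ofReal ?_).trans ENNReal.ofReal_toReal_le
  rw [integral_eq_lintegral_pos_part_sub_lintegral_neg_part hf]
  exact sub_le_self _ ENNReal.toReal_nonneg

theorem ofReal_sub_le_lintegral_of_hasDerivAt {f f' F : ℝ → ℝ} {x y : ℝ} (hxy : x ≤ y)
    (hf : ∀ t ∈ Icc x y, HasDerivAt f (f' t) t) (hf' : IntervalIntegrable f' volume x y)
    (hF : ∀ t ∈ Icc x y, -f' t ≤ F t) :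
    ENNReal.ofReal (f x - f y) ≤ ∫⁻ t in Ioc x y, ENNReal.ofReal (F t) := by
  have hftc : ∫ t in x..y, -f' t = f x - f y := by
    rw [intervalIntegral.integral_neg,
      intervalIntegral.integral_eq_sub_of_hasDerivAt (uIcc_of_le hxy ▸ hf) hf', neg_sub]
  rw [← hftc, intervalIntegral.integral_of_le hxy]
  refine (ofReal_integral_le_lintegral_ofReal (hf'.1.neg)).trans ?_
  refine setLIntegral_mono' measurableSet_Ioc fun t ht => ?_
  exact ENNReal.ofReal_le_ofReal (hF t (Ioc_subset_Icc_self ht))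

theorem ofReal_le_lintegral_of_hasDerivAt_of_tendsto_zero {f f' F : ℝ → ℝ}
    (hf : ∀ t ∈ Ici (0 : ℝ), HasDerivAt f (f' t) t) (hf' : ContinuousOn f' (Ici 0))
    (hF : ∀ t ∈ Ici (0 : ℝ), -f' t ≤ F t) (hlim : Tendsto f atTop (𝓝 0)) :
    ENNReal.ofReal (f 0) ≤ ∫⁻ t in Ici 0, ENNReal.ofReal (F t) := by
  have hT : ∀ T, 0 ≤ T → ENNReal.ofReal (f 0 - f T) ≤ ∫⁻ t in Ici 0, ENNReal.ofReal (F t) :=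
    fun T hT =>
    (ofReal_sub_le_lintegral_of_hasDerivAt hT (fun t ht => hf t ht.1)
      ((hf'.mono Icc_subset_Ici_self).intervalIntegrable_of_Icc hT) (fun t ht => hF t ht.1)).trans
      (lintegral_mono_set fun t ht => ht.1.le)
  have hlim' : Tendsto (fun T => ENNReal.ofReal (f 0 - f T)) atTop (𝓝 (ENNReal.ofReal (f 0))) :=
    (ENNReal.continuous_ofReal.tendsto _).comp (by simpa using tendsto_const_nhds.sub hlim)
  exact le_of_tendsto hlim' (eventually_ge_atTop 0 |>.mono hT)

theorem gradMap_apply (aρ aδ aγ : ℝ) (u : ℝ × ℝ × ℝ) :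
    gradMap aρ aδ aγ u = aρ * u.1 + aδ * u.2.1 + aγ * u.2.2 := by
  simp [gradMap]

theorem continuousOn_nuOne {Vρ Vδ Vγ : ℝ × ℝ × ℝ → ℝ} {s : Set (ℝ × ℝ × ℝ)}
    (hVρ : ContinuousOn Vρ s) (hVδ : ContinuousOn Vδ s) (hVγ : ContinuousOn Vγ s) :
    ContinuousOn (nuOne Vρ Vδ Vγ) s := by
  unfold nuOne
  fun_prop

theorem hasDerivAt_unicycle {V Vρ Vδ Vγ : ℝ × ℝ × ℝ → ℝ} {ρ δ γ v ω : ℝ → ℝ} {t : ℝ}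
    (hV : HasFDerivAt V (gradMap (Vρ (ρ t, δ t, γ t)) (Vδ (ρ t, δ t, γ t)) (Vγ (ρ t, δ t, γ t)))
      (ρ t, δ t, γ t))
    (hρ : HasDerivAt ρ (-(v t) * cos (γ t)) t) (hδ : HasDerivAt δ ((v t / ρ t) * sin (γ t)) t)
    (hγ : HasDerivAt γ ((v t / ρ t) * sin (γ t) - ω t) t) (hρt : ρ t ≠ 0) :
    HasDerivAt (fun τ => V (ρ τ, δ τ, γ τ))
      (nuOne Vρ Vδ Vγ (ρ t, δ t, γ t) * (v t / ρ t) + nuTwo Vγ (ρ t, δ t, γ t) * ω t) t := by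
  refine (hV.comp_hasDerivAt t (hρ.prodMk (hδ.prodMk hγ))).congr_deriv ?_
  simp only [gradMap_apply, nuOne, nuTwo]
  field_simp
  ring

theorem inverse_optimal_cost_lower_bound
    (V Vρ Vδ Vγ ε₁ ε₂ : ℝ × ℝ × ℝ → ℝ)
    (a₁ a₂ : EReal) (η₁ η₁' g₁ η₂ η₂' g₂ : ℝ → ℝ)
    (hadm₁ : IsAdmissible a₁ η₁ η₁' g₁) (hadm₂ : IsAdmissible a₂ η₂ η₂' g₂)
    -- V is C¹ on {ρ > 0} × ℝ² with partial derivatives Vρ, Vδ, Vγ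
    (hV : ∀ p : ℝ × ℝ × ℝ, 0 < p.1 → HasFDerivAt V (gradMap (Vρ p) (Vδ p) (Vγ p)) p)
    (hVρc : ContinuousOn Vρ {p : ℝ × ℝ × ℝ | 0 < p.1})
    (hVδc : ContinuousOn Vδ {p : ℝ × ℝ × ℝ | 0 < p.1})
    (hVγc : ContinuousOn Vγ {p : ℝ × ℝ × ℝ | 0 < p.1})
    -- ε₁, ε₂ are continuous and positive on {ρ > 0} × ℝ²
    (hε₁pos : ∀ p : ℝ × ℝ × ℝ, 0 < p.1 → 0 < ε₁ p)
    (hε₂pos : ∀ p : ℝ × ℝ × ℝ, 0 < p.1 → 0 < ε₂ p)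
    -- the trajectory: a solution of the polar unicycle on [0,∞) with continuous controls
    (ρ δ γ v ω : ℝ → ℝ)
    (hρpos : ∀ t ∈ Set.Ici (0 : ℝ), 0 < ρ t)
    (hvc : ContinuousOn v (Set.Ici (0 : ℝ))) (hωc : ContinuousOn ω (Set.Ici (0 : ℝ)))
    (hρ : ∀ t ∈ Set.Ici (0 : ℝ), HasDerivAt ρ (-(v t) * Real.cos (γ t)) t)
    (hδ : ∀ t ∈ Set.Ici (0 : ℝ), HasDerivAt δ ((v t / ρ t) * Real.sin (γ t)) t)
    (hγ : ∀ t ∈ Set.Ici (0 : ℝ),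
      HasDerivAt γ ((v t / ρ t) * Real.sin (γ t) - ω t) t)
    -- the weighted controls stay within the domains of η₁, η₂
    (hsat₁ : ∀ t ∈ Set.Ici (0 : ℝ),
      ((|v t| / (ε₁ (ρ t, δ t, γ t) * ρ t) : ℝ) : EReal) < a₁)
    (hsat₂ : ∀ t ∈ Set.Ici (0 : ℝ),
      ((|ω t| / ε₂ (ρ t, δ t, γ t) : ℝ) : EReal) < a₂)
    -- V converges to zero along the trajectory
    (hlim : Tendsto (fun t => V (ρ t, δ t, γ t)) atTop (nhds 0)) :
    ENNReal.ofReal (V (ρ 0, δ 0, γ 0))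
      ≤ ∫⁻ t in Set.Ici (0 : ℝ),
          ENNReal.ofReal
            (lfT g₁ (ε₁ (ρ t, δ t, γ t) * |nuOne Vρ Vδ Vγ (ρ t, δ t, γ t)|)
              + lfT g₂ (ε₂ (ρ t, δ t, γ t) * |nuTwo Vγ (ρ t, δ t, γ t)|)
              + η₁ (|v t| / (ε₁ (ρ t, δ t, γ t) * ρ t))
              + η₂ (|ω t| / ε₂ (ρ t, δ t, γ t))) := by
  have hq : ContinuousOn (fun t => (ρ t, δ t, γ t)) (Ici 0) := fun t ht =>
    ((hρ t ht).continuousAt.prodMk ((hδ t ht).continuousAt.prodMk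
      (hγ t ht).continuousAt)).continuousWithinAt
  have hρc : ContinuousOn ρ (Ici 0) := continuous_fst.comp_continuousOn hq
  refine ofReal_le_lintegral_of_hasDerivAt_of_tendsto_zero
    (fun t ht => hasDerivAt_unicycle (hV _ (hρpos t ht)) (hρ t ht) (hδ t ht) (hγ t ht)
      (hρpos t ht).ne') ?_ (fun t ht => ?_) hlim
  · have hν₁ := (continuousOn_nuOne hVρc hVδc hVγc).comp hq hρpos
    have hν₂ : ContinuousOn (fun t => nuTwo Vγ (ρ t, δ t, γ t)) (Ici 0) :=
      (hVγc.comp hq hρpos).neg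
    exact (hν₁.mul (hvc.div hρc fun t ht => (hρpos t ht).ne')).add (hν₂.mul hωc)
  · have hρt := hρpos t ht
    have hε₁ := hε₁pos (ρ t, δ t, γ t) hρt
    have hε₂ := hε₂pos (ρ t, δ t, γ t) hρt
    have hv : |v t / ρ t| / ε₁ (ρ t, δ t, γ t) = |v t| / (ε₁ (ρ t, δ t, γ t) * ρ t) := by
      rw [abs_div, abs_of_pos hρt, div_div, mul_comm]
    have hu₁ : |v t / ρ t| / ε₁ (ρ t, δ t, γ t) ∈ domA a₁ :=
      hv ▸ ⟨div_nonneg (abs_nonneg _) (mul_pos hε₁ hρt).le, hsat₁ t ht⟩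
    have h₁ := hadm₁.neg_mul_le_lfT_add (ν := nuOne Vρ Vδ Vγ (ρ t, δ t, γ t)) hε₁ hu₁
    have h₂ := hadm₂.neg_mul_le_lfT_add (ν := nuTwo Vγ (ρ t, δ t, γ t)) hε₂
      ⟨div_nonneg (abs_nonneg _) hε₂.le, hsat₂ t ht⟩
    rw [hv] at h₁
    linarith

end
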